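/- arXiv:1411.4184 — 4 statements merged into one kernel-verified Lean document; each statement's English description precedes it below -/
import Mathlib

section
/- Let H be a simple graph and let (G, σ) be an H-colored graph, i.e., a simple graph G together with a coloring σ : V(G) → V(H). A set X ⊆ V(G) hits all σ-H-subgraphs of G if and only if there exists a connected component C of H such that, setting V_C = σ⁻¹(C), the set X ∩ V_C hits all σ|_{V_C}-C-subgraphs of the induced subgraph G[V_C]. -/
/-!
Adjacent vertices of `H` lie in the same component, so a colorful copy of `H` is the same thing
as a family of colorful copies of the components of `H`, one per component, each living on the
vertices of `G` colored by that component. Restricting a copy of `H` to a component gives a copy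
of the component; conversely, if every component has a copy avoiding `X`, gluing these copies
gives a copy of `H` avoiding `X`.
-/

namespace SimpleGraph

variable {V W ι : Type*}

def HitsColorfulCopies (H : SimpleGraph W) (G : SimpleGraph V) (σ : V → W) (X : Set V) : Prop :=
  ∀ π : W → V, (∀ a b, H.Adj a b → G.Adj (π a) (π b)) → (∀ a, σ (π a) = a) → ∃ a, π a ∈ X

variable {H : SimpleGraph W} {G : SimpleGraph V} {σ : V → W} {X : Set V}

theorem hitsColorfulCopies_induce_iff (S : Set W) :
    HitsColorfulCopies (H.induce S) (G.induce (σ ⁻¹' S)) (S.restrictPreimage σ)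
        (Subtype.val ⁻¹' X) ↔
      ∀ π : S → σ ⁻¹' S,
        (∀ a b, (H.induce S).Adj a b → (G.induce (σ ⁻¹' S)).Adj (π a) (π b)) →
        (∀ a : S, σ (π a) = a) → ∃ a, (π a : V) ∈ X ∩ σ ⁻¹' S := by
  simp only [HitsColorfulCopies, Subtype.ext_iff, Set.restrictPreimage_coe, Set.mem_inter_iff,
    Set.mem_preimage, Subtype.coe_prop, and_true]

theorem HitsColorfulCopies.of_induce {S : Set W}
    (h : HitsColorfulCopies (H.induce S) (G.induce (σ ⁻¹' S)) (S.restrictPreimage σ)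
      (Subtype.val ⁻¹' X)) :
    HitsColorfulCopies H G σ X := by
  intro π hπ hσ
  let π' : S → σ ⁻¹' S := fun a => ⟨π a, by simp [hσ]⟩
  obtain ⟨a, ha⟩ := h π' (fun a b hab => hπ a b hab) (fun a => Subtype.ext (hσ a))
  exact ⟨a, ha⟩

theorem exists_fiber_hitsColorfulCopies {κ : W → ι} (hκ : ∀ a b, H.Adj a b → κ a = κ b)
    (h : HitsColorfulCopies H G σ X) :
    ∃ i, HitsColorfulCopies (H.induce {a | κ a = i}) (G.induce (σ ⁻¹' {a | κ a = i}))
      (Set.restrictPreimage {a | κ a = i} σ) (Subtype.val ⁻¹' X) := by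
  by_contra! hfib
  simp only [HitsColorfulCopies, not_forall, not_exists] at hfib
  choose π hπ hσ hX using hfib
  have glue_eq : ∀ {a : W} {i : ι} (hai : κ a = i), (π (κ a) ⟨a, rfl⟩ : V) = π i ⟨a, hai⟩ := by
    rintro a _ rfl
    rfl
  obtain ⟨a, ha⟩ := h (fun a => π (κ a) ⟨a, rfl⟩)
    (fun a b hab => by
      rw [glue_eq (hκ b a hab.symm)]
      exact hπ (κ a) ⟨a, rfl⟩ ⟨b, (hκ a b hab).symm⟩ hab)
    (fun a => congrArg Subtype.val (hσ (κ a) ⟨a, rfl⟩))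
  exact hX (κ a) ⟨a, rfl⟩ ha

theorem hitsColorfulCopies_iff_exists_connectedComponent :
    HitsColorfulCopies H G σ X ↔
      ∃ c : H.ConnectedComponent,
        HitsColorfulCopies (H.induce {a | H.connectedComponentMk a = c})
          (G.induce (σ ⁻¹' {a | H.connectedComponentMk a = c}))
          (Set.restrictPreimage {a | H.connectedComponentMk a = c} σ) (Subtype.val ⁻¹' X) :=
  ⟨exists_fiber_hitsColorfulCopies fun _ _ => ConnectedComponent.connectedComponentMk_eq_of_adj,
    fun ⟨_, hc⟩ => hc.of_induce⟩

end SimpleGraph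

open SimpleGraph in
theorem colorful_hitting_componentwise {V W : Type*} (H : SimpleGraph W) (G : SimpleGraph V)
    (σ : V → W) (X : Set V) :
    (∀ π : W → V,
        (∀ a b : W, H.Adj a b → G.Adj (π a) (π b)) →
        (∀ a : W, σ (π a) = a) →
        ∃ a : W, π a ∈ X)
    ↔ ∃ c : H.ConnectedComponent,
        ∀ π : {a : W | H.connectedComponentMk a = c} →
              {v : V | σ v ∈ {a : W | H.connectedComponentMk a = c}},
          (∀ a b : {a : W | H.connectedComponentMk a = c},
              (H.induce {a : W | H.connectedComponentMk a = c}).Adj a b →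
              (G.induce {v : V | σ v ∈ {a : W | H.connectedComponentMk a = c}}).Adj (π a) (π b)) →
          (∀ a : {a : W | H.connectedComponentMk a = c}, σ (π a : V) = (a : W)) →
          ∃ a : {a : W | H.connectedComponentMk a = c},
            (π a : V) ∈ X ∩ {v : V | σ v ∈ {a : W | H.connectedComponentMk a = c}} :=
  hitsColorfulCopies_iff_exists_connectedComponent.trans
    (exists_congr fun _ => hitsColorfulCopies_induce_iff _)
end

section
/- Let H be a finite simple graph and let a, b be distinct vertices lying in the same connected component of H, and let S be a minimal ab-separator in H (note S is then nonempty). Then there exists a nonempty set A ⊆ V(H) such that the induced subgraph H[A] is connected, N_H(A) = S, b ∉ N_H[A], and N_H(N_H[A]) ≠ ∅ (i.e., N_H[A] is not an entire connected component of H). Consequently, every minimal separator of H arising from two vertices in a common component is the boundary N_H(A) of a connected set A whose closed neighborhood is not a whole component, so μ(H) ≤ μ*(H). -/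
/-!
Let `A` be the set of vertices reachable from `a` in `H − S`. It is connected, avoids `b`, and
its boundary lies in `S`. Minimality of `S` gives, for each `s ∈ S`, an `ab`-walk meeting `S`
only in `s`; its two halves show that `s` has a neighbour in `A` and a neighbour in the component
of `b` in `H − S`. The first gives `N(A) = S`; the second, applied to any `s ∈ S` (and `S ≠ ∅`
because `a` and `b` are connected), gives a vertex of `N(N[A])`.
-/

/-- The (open) neighborhood of a set `A`: vertices outside `A` with a neighbor in `A`. -/
def nbhd {V : Type*} (H : SimpleGraph V) (A : Set V) : Set V :=
  {v | v ∉ A ∧ ∃ a ∈ A, H.Adj a v}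

/-- `S` is an `ab`-separator: `a, b ∉ S` and `a` and `b` lie in different connected
components of `H − S`, i.e. every walk from `a` to `b` in `H` meets `S`. -/
def IsSep {V : Type*} (H : SimpleGraph V) (a b : V) (S : Set V) : Prop :=
  a ∉ S ∧ b ∉ S ∧ ∀ p : H.Walk a b, ∃ v ∈ p.support, v ∈ S

/-- `S` is a minimal `ab`-separator: no proper subset of `S` is an `ab`-separator. -/
def IsMinSep {V : Type*} (H : SimpleGraph V) (a b : V) (S : Set V) : Prop :=
  IsSep H a b S ∧ ∀ S' ⊂ S, ¬ IsSep H a b S'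

namespace SimpleGraph

variable {V : Type*} {G : SimpleGraph V} {S : Set V} {u v w : V}

def ReachableAvoiding (G : SimpleGraph V) (S : Set V) (u v : V) : Prop :=
  ∃ p : G.Walk u v, ∀ x ∈ p.support, x ∉ S

namespace ReachableAvoiding

theorem refl (hu : u ∉ S) : G.ReachableAvoiding S u u :=
  ⟨.nil, by simpa using hu⟩

theorem symm (h : G.ReachableAvoiding S u v) : G.ReachableAvoiding S v u :=
  let ⟨p, hp⟩ := h
  ⟨p.reverse, fun x hx => hp x (by simpa using hx)⟩

theorem trans (huv : G.ReachableAvoiding S u v) (hvw : G.ReachableAvoiding S v w) :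
    G.ReachableAvoiding S u w :=
  let ⟨p, hp⟩ := huv
  let ⟨q, hq⟩ := hvw
  ⟨p.append q, fun x hx => (Walk.mem_support_append_iff p q).1 hx |>.elim (hp x) (hq x)⟩

theorem left_notMem (h : G.ReachableAvoiding S u v) : u ∉ S :=
  let ⟨p, hp⟩ := h
  hp u p.start_mem_support

theorem right_notMem (h : G.ReachableAvoiding S u v) : v ∉ S :=
  h.symm.left_notMem

theorem of_adj (hvw : G.Adj v w) (hv : v ∉ S) (hw : w ∉ S) : G.ReachableAvoiding S v w :=
  ⟨hvw.toWalk, by simp [hv, hw]⟩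

end ReachableAvoiding

theorem nbhd_setOf_reachableAvoiding_subset (u : V) :
    nbhd G {v | G.ReachableAvoiding S u v} ⊆ S := by
  rintro w ⟨hw, v, huv, hvw⟩
  by_contra hwS
  exact hw (huv.trans (.of_adj hvw huv.right_notMem hwS))

theorem connected_induce_setOf_reachableAvoiding (hu : u ∉ S) :
    (G.induce {v | G.ReachableAvoiding S u v}).Connected := by
  classical
  refine (connected_iff_exists_forall_reachable _).2 ⟨⟨u, .refl hu⟩, ?_⟩
  rintro ⟨v, p, hp⟩
  have hsupp : ∀ x ∈ p.support, G.ReachableAvoiding S u x := fun x hx =>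
    ⟨p.takeUntil x hx, fun y hy => hp y (p.support_takeUntil_subset_support hx hy)⟩
  exact (p.induce _ hsupp).reachable

theorem Walk.exists_reachableAvoiding_adj {s : V} (hs : s ∈ S) (p : G.Walk u s) (hu : u ∉ S)
    (hp : ∀ x ∈ p.support, x ∈ S → x = s) :
    ∃ w, G.ReachableAvoiding S u w ∧ G.Adj w s := by
  induction p with
  | nil => exact absurd hs hu
  | @cons u v s huv q ih =>
    by_cases hvs : v = s
    · subst hvs
      exact ⟨u, .refl hu, huv⟩
    · have hv : v ∉ S := fun hvS => hvs (hp v (by simp) hvS)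
      obtain ⟨w, hvw, hws⟩ := ih hs hv fun x hx => hp x (by simp [hx])
      exact ⟨w, (ReachableAvoiding.of_adj huv hu hv).trans hvw, hws⟩

end SimpleGraph

open SimpleGraph

section

variable {V : Type*} {H : SimpleGraph V} {a b s : V} {S : Set V}

theorem IsSep.symm (h : IsSep H a b S) : IsSep H b a S :=
  ⟨h.2.1, h.1, fun p => by simpa using h.2.2 p.reverse⟩

theorem IsMinSep.symm (h : IsMinSep H a b S) : IsMinSep H b a S :=
  ⟨h.1.symm, fun S' hS' hsep => h.2 S' hS' hsep.symm⟩

theorem IsSep.not_reachableAvoiding (h : IsSep H a b S) : ¬ H.ReachableAvoiding S a b := by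
  rintro ⟨p, hp⟩
  obtain ⟨v, hv, hvS⟩ := h.2.2 p
  exact hp v hv hvS

theorem IsSep.nonempty (h : IsSep H a b S) (hreach : H.Reachable a b) : S.Nonempty :=
  let ⟨p⟩ := hreach
  let ⟨v, _, hvS⟩ := h.2.2 p
  ⟨v, hvS⟩

theorem IsMinSep.exists_walk_meets_only (h : IsMinSep H a b S) (hs : s ∈ S) :
    ∃ p : H.Walk a b, s ∈ p.support ∧ ∀ x ∈ p.support, x ∈ S → x = s := by
  have hnot : ¬ IsSep H a b (S \ {s}) := h.2 _ (Set.sdiff_singleton_ssubset.2 hs)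
  simp only [IsSep, Set.mem_sdiff, Set.mem_singleton_iff, not_and, not_not, not_forall,
    not_exists] at hnot
  obtain ⟨p, hp⟩ := hnot (fun ha => absurd ha h.1.1) (fun hb => absurd hb h.1.2.1)
  obtain ⟨y, hy, hyS⟩ := h.1.2.2 p
  obtain rfl : y = s := hp y hy hyS
  exact ⟨p, hy, hp⟩

theorem IsMinSep.exists_reachableAvoiding_adj (h : IsMinSep H a b S) (hs : s ∈ S) :
    ∃ w, H.ReachableAvoiding S a w ∧ H.Adj w s := by
  classical
  obtain ⟨p, hsp, hp⟩ := h.exists_walk_meets_only hs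
  exact (p.takeUntil s hsp).exists_reachableAvoiding_adj hs h.1.1 fun x hx =>
    hp x (p.support_takeUntil_subset_support hsp hx)

theorem IsMinSep.nbhd_setOf_reachableAvoiding (h : IsMinSep H a b S) :
    nbhd H {v | H.ReachableAvoiding S a v} = S := by
  refine (nbhd_setOf_reachableAvoiding_subset a).antisymm fun s hs => ?_
  obtain ⟨w, haw, hws⟩ := h.exists_reachableAvoiding_adj hs
  exact ⟨fun has => has.right_notMem hs, w, haw, hws⟩

end

theorem minimal_separator_boundary_of_chunk_general {V : Type*} (H : SimpleGraph V)
    (a b : V) (hreach : H.Reachable a b)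
    (S : Set V) (hS : IsMinSep H a b S) :
    ∃ A : Set V, A.Nonempty ∧ (H.induce A).Connected ∧ nbhd H A = S ∧
      b ∉ A ∪ nbhd H A ∧ (nbhd H (A ∪ nbhd H A)).Nonempty := by
  have hnbhd := hS.nbhd_setOf_reachableAvoiding
  have hsep := hS.1.not_reachableAvoiding
  refine ⟨{v | H.ReachableAvoiding S a v}, ⟨a, .refl hS.1.1⟩,
    connected_induce_setOf_reachableAvoiding hS.1.1, hnbhd, ?_, ?_⟩ <;> rw [hnbhd]
  · rintro (hb | hb)
    exacts [hsep hb, hS.1.2.1 hb]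
  · obtain ⟨s, hs⟩ := hS.1.nonempty hreach
    obtain ⟨w, hbw, hws⟩ := hS.symm.exists_reachableAvoiding_adj hs
    refine ⟨w, ?_, s, Or.inr hs, hws.symm⟩
    rintro (haw | hwS)
    exacts [hsep (haw.trans hbw.symm), hbw.right_notMem hwS]

theorem minimal_separator_boundary_of_chunk {V : Type*} [Fintype V] (H : SimpleGraph V)
    (a b : V) (hab : a ≠ b) (hreach : H.Reachable a b)
    (S : Set V) (hS : IsMinSep H a b S) :
    ∃ A : Set V, A.Nonempty ∧ (H.induce A).Connected ∧ nbhd H A = S ∧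
      b ∉ A ∪ nbhd H A ∧ (nbhd H (A ∪ nbhd H A)).Nonempty :=
  minimal_separator_boundary_of_chunk_general H a b hreach S hS
end

section
/- Every finite connected simple graph that is not isomorphic to a path graph P_n (for any n ≥ 1) contains at least three vertices that are not cutvertices. -/
/-!
If `c` is a cutvertex, each side of `c` contains a non-cutvertex: the vertex of that side farthest
from `c` cannot separate anything from `c`. Hence a nontrivial graph has two non-cutvertices `a`
and `b`, and if there is no third one, every cutvertex separates `a` from `b`, so every `a`–`b`
walk visits every vertex. A shortest `a`–`b` walk is then a Hamiltonian path without chords,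
since adjacent vertices have distances from `a` differing by at most one.
-/

/-- `v` is a cutvertex of `G`: deleting `v` increases the number of connected components,
i.e. there are two vertices different from `v` lying in the same connected component of `G`
but in different connected components of `G − v` (every walk between them passes through `v`). -/
def IsCutVertex {V : Type*} (G : SimpleGraph V) (v : V) : Prop :=
  ∃ x y : V, x ≠ v ∧ y ≠ v ∧ G.Reachable x y ∧ ∀ p : G.Walk x y, v ∈ p.support

open SimpleGraph

section

variable {V : Type*} {G : SimpleGraph V}

theorem IsCutVertex.exists_forall_mem_support {v : V} (hv : IsCutVertex G v) (u : V) :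
    ∃ x, x ≠ v ∧ ∀ p : G.Walk u x, v ∈ p.support := by
  obtain ⟨x, y, hx, hy, -, hxy⟩ := hv
  by_cases hux : ∀ p : G.Walk u x, v ∈ p.support
  · exact ⟨x, hx, hux⟩
  obtain ⟨p, hp⟩ := not_forall.1 hux
  refine ⟨y, hy, fun q => ?_⟩
  have := hxy (p.reverse.append q)
  rw [Walk.mem_support_append_iff, Walk.support_reverse, List.mem_reverse] at this
  exact this.resolve_left hp

namespace SimpleGraph

theorem Reachable.dist_lt_of_forall_mem_support {u v x : V} (hux : G.Reachable u x)
    (hxv : x ≠ v) (hall : ∀ p : G.Walk u x, v ∈ p.support) : G.dist u v < G.dist u x := by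
  classical
  obtain ⟨p, -, hp⟩ := hux.exists_path_of_dist
  calc G.dist u v ≤ (p.takeUntil v (hall p)).length := dist_le _
    _ < p.length := Walk.length_takeUntil_lt_length _ hxv.symm
    _ = G.dist u x := hp

theorem Connected.exists_not_isCutVertex_walk_notMem_support [Finite V] (hG : G.Connected) {c x : V}
    (hxc : x ≠ c) : ∃ z, ¬IsCutVertex G z ∧ ∃ p : G.Walk x z, c ∉ p.support := by
  classical
  let S : Set V := {w | ∃ p : G.Walk x w, c ∉ p.support}
  have hxS : x ∈ S := ⟨Walk.nil, by simpa using hxc.symm⟩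
  obtain ⟨z, ⟨pz, hpz⟩, hzmax⟩ := S.exists_max_image (G.dist c) S.toFinite ⟨x, hxS⟩
  refine ⟨z, fun hz => ?_, pz, hpz⟩
  have hzc : z ≠ c := fun h => hpz (h ▸ pz.end_mem_support)
  obtain ⟨t, htz, hall⟩ := hz.exists_forall_mem_support c
  obtain ⟨q, hq, -⟩ := hG.exists_path_of_dist c t
  have hzq : z ∈ q.reverse.support := by simpa using hall q
  have hcq : c ∉ (q.reverse.takeUntil z hzq).support :=
    Walk.endpoint_notMem_support_takeUntil hq.reverse hzq hzc.symm
  have htS : t ∈ S := by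
    refine ⟨pz.append (q.reverse.takeUntil z hzq).reverse, ?_⟩
    simpa [Walk.mem_support_append_iff, not_or] using ⟨hpz, hcq⟩
  exact (hzmax t htS).not_gt ((hG.preconnected c t).dist_lt_of_forall_mem_support htz hall)

theorem Connected.exists_not_isCutVertex_separated_of_isCutVertex [Finite V] (hG : G.Connected)
    {c : V} (hc : IsCutVertex G c) :
    ∃ z₁ z₂, z₁ ≠ z₂ ∧ ¬IsCutVertex G z₁ ∧ ¬IsCutVertex G z₂ ∧
      ∀ p : G.Walk z₁ z₂, c ∈ p.support := by
  obtain ⟨x, y, hx, hy, -, hxy⟩ := hc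
  obtain ⟨z₁, hz₁, p₁, hp₁⟩ := hG.exists_not_isCutVertex_walk_notMem_support hx
  obtain ⟨z₂, hz₂, p₂, hp₂⟩ := hG.exists_not_isCutVertex_walk_notMem_support hy
  have hsep : ∀ p : G.Walk z₁ z₂, c ∈ p.support := by
    intro p
    have := hxy (p₁.append (p.append p₂.reverse))
    simp only [Walk.mem_support_append_iff, Walk.support_reverse, List.mem_reverse] at this
    tauto
  refine ⟨z₁, z₂, fun h => ?_, hz₁, hz₂, hsep⟩
  subst h
  have hcz : c = z₁ := by simpa using hsep Walk.nil
  exact hp₁ (hcz ▸ p₁.end_mem_support)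

theorem Connected.exists_two_not_isCutVertex [Finite V] [Nontrivial V] (hG : G.Connected) :
    ∃ a b, a ≠ b ∧ ¬IsCutVertex G a ∧ ¬IsCutVertex G b := by
  obtain ⟨c⟩ := hG.nonempty
  by_cases hc : IsCutVertex G c
  · obtain ⟨a, b, hab, ha, hb, -⟩ := hG.exists_not_isCutVertex_separated_of_isCutVertex hc
    exact ⟨a, b, hab, ha, hb⟩
  obtain ⟨x, hxc⟩ := exists_ne c
  obtain ⟨z, hz, p, hp⟩ := hG.exists_not_isCutVertex_walk_notMem_support hxc
  exact ⟨c, z, fun h => hp (h ▸ p.end_mem_support), hc, hz⟩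

theorem Connected.mem_support_of_forall_not_isCutVertex_eq_or_eq [Finite V] (hG : G.Connected)
    {a b : V} (honly : ∀ w, ¬IsCutVertex G w → w = a ∨ w = b) (p : G.Walk a b) (v : V) :
    v ∈ p.support := by
  by_cases hv : IsCutVertex G v
  · obtain ⟨z₁, z₂, hz, hz₁, hz₂, hsep⟩ :=
      hG.exists_not_isCutVertex_separated_of_isCutVertex hv
    rcases honly z₁ hz₁ with rfl | rfl <;> rcases honly z₂ hz₂ with rfl | rfl
    · exact absurd rfl hz
    · exact hsep p
    · simpa using hsep p.reverse
    · exact absurd rfl hz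
  · rcases honly v hv with rfl | rfl
    exacts [p.start_mem_support, p.end_mem_support]

namespace Walk

variable {a b : V} {p : G.Walk a b}

theorem dist_getVert_of_length_eq_dist (hp : p.length = G.dist a b) {i : ℕ}
    (hi : i ≤ p.length) : G.dist a (p.getVert i) = i := by
  rw [← length_eq_dist_of_subwalk hp (p.isSubwalk_take i), take_length]
  exact min_eq_left hi

theorem getVert_dist_of_length_eq_dist (hp : p.length = G.dist a b) {v : V}
    (hv : v ∈ p.support) : p.getVert (G.dist a v) = v := by
  classical
  rw [← length_eq_dist_of_subwalk hp (p.isSubwalk_takeUntil hv), getVert_length_takeUntil]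

noncomputable def pathGraphIsoOfLengthEqDist (hp : p.length = G.dist a b)
    (hcov : ∀ v, v ∈ p.support) : pathGraph (p.length + 1) ≃g G where
  toFun i := p.getVert i
  invFun v := ⟨G.dist a v, by
    classical
    rw [← length_eq_dist_of_subwalk hp (p.isSubwalk_takeUntil (hcov v))]
    exact Nat.lt_succ_of_le (p.length_takeUntil_le_length _)⟩
  left_inv i := Fin.ext (dist_getVert_of_length_eq_dist hp (Nat.le_of_lt_succ i.isLt))
  right_inv v := getVert_dist_of_length_eq_dist hp (hcov v)
  map_rel_iff' {i j} := by
    have hi := dist_getVert_of_length_eq_dist hp (Nat.le_of_lt_succ i.isLt)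
    have hj := dist_getVert_of_length_eq_dist hp (Nat.le_of_lt_succ j.isLt)
    simp only [Equiv.coe_fn_mk, pathGraph_adj]
    constructor
    · intro hadj
      have hne : (i : ℕ) ≠ j := fun h => hadj.ne (by rw [h])
      rcases hadj.diff_dist_adj (u := a) with h | h | h <;> omega
    · rintro (h | h)
      · simpa [← h] using p.adj_getVert_succ (by omega : (i : ℕ) < p.length)
      · simpa [← h] using (p.adj_getVert_succ (by omega : (j : ℕ) < p.length)).symm

end Walk

end SimpleGraph

end

theorem three_noncut_vertices {V : Type*} [Fintype V] (G : SimpleGraph V)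
    (hconn : G.Connected)
    (hpath : ∀ n : ℕ, 1 ≤ n → IsEmpty (G ≃g SimpleGraph.pathGraph n)) :
    ∃ a b c : V, a ≠ b ∧ a ≠ c ∧ b ≠ c ∧
      ¬ IsCutVertex G a ∧ ¬ IsCutVertex G b ∧ ¬ IsCutVertex G c := by
  have no_shortest_walk_covers : ∀ {a b : V} (p : G.Walk a b), p.length = G.dist a b →
      ¬ ∀ v, v ∈ p.support := fun p hp hcov =>
    (hpath _ (Nat.le_add_left 1 _)).false (p.pathGraphIsoOfLengthEqDist hp hcov).symm
  cases subsingleton_or_nontrivial V with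
  | inl _ =>
    obtain ⟨v⟩ := hconn.nonempty
    exact (no_shortest_walk_covers (Walk.nil : G.Walk v v) (by simp)
      fun w => by simp [Subsingleton.elim w v]).elim
  | inr _ =>
    obtain ⟨a, b, hab, ha, hb⟩ := hconn.exists_two_not_isCutVertex
    by_contra! honly
    obtain ⟨p, -, hp⟩ := hconn.exists_path_of_dist a b
    refine no_shortest_walk_covers p hp
      (hconn.mem_support_of_forall_not_isCutVertex_eq_or_eq (fun c hc => ?_) p)
    by_contra! hcab
    exact hc (honly a b c hab hcab.1.symm hcab.2.symm ha hb)
end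

section
/- Let H be a finite simple graph and D ⊆ V(H). Define ∂D = D ∩ N_H(V(H) ∖ D) (the vertices of D having a neighbor outside D) and int D = D ∖ ∂D. Then the set P := N_H[int D] satisfies: (a) P ⊆ D; (b) P is a slice, i.e., N_H(int P) = ∂P where ∂P and int P are the boundary and interior of P; (c) int P = int D; (d) ∂P ⊆ ∂D and ∂D ∖ ∂P = D ∖ P; and (e) P is the unique inclusion-wise maximal slice contained in D, i.e., every slice P' ⊆ D satisfies P' ⊆ P. -/
/-- The boundary of `D`: `∂D = D ∩ N_H(V(H) ∖ D)`, the vertices of `D` having a neighbor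
outside `D`. -/
def bdry {V : Type*} (H : SimpleGraph V) (D : Set V) : Set V :=
  D ∩ nbhd H Dᶜ

/-- The interior of `D`: `int D = D ∖ ∂D`. -/
def intr {V : Type*} (H : SimpleGraph V) (D : Set V) : Set V :=
  D \ bdry H D

/-- `D` is a slice if `N_H(int D) = ∂D`. -/
def IsSlice {V : Type*} (H : SimpleGraph V) (D : Set V) : Prop :=
  nbhd H (intr H D) = bdry H D

/-!
Every vertex of `int D` has all its neighbours in `D`, so `P = N[int D] ⊆ D`, and the
interior of `P` is exactly `int D`; hence `∂P = N(int D)`, which makes `P` a slice and gives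
the boundary identities. Conversely, any slice `P'` equals `N[int P']`, and `int P' ⊆ int D`
whenever `P' ⊆ D`, so `P' ⊆ N[int D] = P` by monotonicity of closed neighbourhoods.
-/

section Slice

variable {V : Type*} (H : SimpleGraph V)

lemma mem_intr_iff {D : Set V} {v : V} :
    v ∈ intr H D ↔ v ∈ D ∧ ∀ w, H.Adj v w → w ∈ D := by
  simp only [intr, bdry, nbhd, Set.mem_sdiff, Set.mem_inter_iff, Set.mem_ofPred_eq,
    Set.mem_compl_iff]
  refine and_congr_right fun hv => ⟨fun h w hvw => ?_, fun h ⟨_, _, w, hw, hwv⟩ => hw (h w hwv.symm)⟩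
  by_contra hw
  exact h ⟨hv, not_not.mpr hv, w, hw, hvw.symm⟩

lemma intr_subset (D : Set V) : intr H D ⊆ D := Set.sdiff_subset

lemma intr_mono {D D' : Set V} (h : D ⊆ D') : intr H D ⊆ intr H D' := fun v hv => by
  rw [mem_intr_iff] at hv ⊢
  exact ⟨h hv.1, fun w hw => h (hv.2 w hw)⟩

lemma bdry_eq_diff_intr (D : Set V) : bdry H D = D \ intr H D := by
  ext v
  simp only [intr, bdry, Set.mem_sdiff, Set.mem_inter_iff]
  tauto

lemma nbhd_intr_subset_bdry (D : Set V) : nbhd H (intr H D) ⊆ bdry H D := by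
  rintro v ⟨hv, a, ha, hav⟩
  rw [bdry_eq_diff_intr]
  exact ⟨((mem_intr_iff H).mp ha).2 v hav, hv⟩

lemma union_nbhd_mono {A B : Set V} (h : A ⊆ B) : A ∪ nbhd H A ⊆ B ∪ nbhd H B := by
  rintro v (hv | ⟨-, a, ha, hav⟩)
  · exact Or.inl (h hv)
  · by_cases hvB : v ∈ B
    · exact Or.inl hvB
    · exact Or.inr ⟨hvB, a, h ha, hav⟩

lemma union_nbhd_intr_subset (D : Set V) : intr H D ∪ nbhd H (intr H D) ⊆ D :=
  Set.union_subset (intr_subset H D) fun _ hv => (nbhd_intr_subset_bdry H D hv).1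

lemma subset_intr_union_nbhd (A : Set V) : A ⊆ intr H (A ∪ nbhd H A) := fun v hv => by
  refine (mem_intr_iff H).mpr ⟨Or.inl hv, fun w hvw => ?_⟩
  by_cases hw : w ∈ A
  · exact Or.inl hw
  · exact Or.inr ⟨hw, v, hv, hvw⟩

lemma intr_union_nbhd_intr (D : Set V) :
    intr H (intr H D ∪ nbhd H (intr H D)) = intr H D :=
  (intr_mono H (union_nbhd_intr_subset H D)).antisymm (subset_intr_union_nbhd H _)

lemma bdry_union_nbhd {A : Set V} (hA : intr H (A ∪ nbhd H A) = A) :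
    bdry H (A ∪ nbhd H A) = nbhd H A := by
  rw [bdry_eq_diff_intr, hA, Set.union_sdiff_left, sdiff_eq_self_iff_disjoint]
  exact Set.disjoint_left.mpr fun _ hv hn => hn.1 hv

lemma eq_intr_union_nbhd_of_isSlice {D : Set V} (hD : IsSlice H D) :
    D = intr H D ∪ nbhd H (intr H D) := by
  rw [hD, bdry_eq_diff_intr, Set.union_sdiff_cancel (intr_subset H D)]

end Slice

theorem core_slice_properties_general {V : Type*} (H : SimpleGraph V) (D : Set V)
    (P : Set V) (hP : P = intr H D ∪ nbhd H (intr H D)) :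
    P ⊆ D ∧
    IsSlice H P ∧
    intr H P = intr H D ∧
    (bdry H P ⊆ bdry H D ∧ bdry H D \ bdry H P = D \ P) ∧
    (∀ P' : Set V, P' ⊆ D → IsSlice H P' → P' ⊆ P) := by
  subst hP
  have hintr := intr_union_nbhd_intr H D
  have hbdry := bdry_union_nbhd H hintr
  refine ⟨union_nbhd_intr_subset H D, ?_, hintr, ⟨?_, ?_⟩, ?_⟩
  · rw [IsSlice, hintr, hbdry]
  · exact hbdry.trans_subset (nbhd_intr_subset_bdry H D)
  · rw [hbdry, bdry_eq_diff_intr, Set.sdiff_sdiff]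
  · intro P' hP' hslice
    rw [eq_intr_union_nbhd_of_isSlice H hslice]
    exact union_nbhd_mono H (intr_mono H hP')

theorem core_slice_properties {V : Type*} [Fintype V] (H : SimpleGraph V) (D : Set V)
    (P : Set V) (hP : P = intr H D ∪ nbhd H (intr H D)) :
    P ⊆ D ∧
    IsSlice H P ∧
    intr H P = intr H D ∧
    (bdry H P ⊆ bdry H D ∧ bdry H D \ bdry H P = D \ P) ∧
    (∀ P' : Set V, P' ⊆ D → IsSlice H P' → P' ⊆ P) :=
  core_slice_properties_general H D P hP
end
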